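/- Let n be an integer with 9 ≤ n ≤ 11, and set b_max = 1/(2n+2), b̃_max = 1/(5n), a_max = b_max(2+(n-2)b_max)²/(2(2+(n-3)b_max)), ã_max = b̃_max + (n-2)b̃_max²/2, and γ_max = b_max/(2+(n-3)b_max). Then the following three inequalities hold: (i) ((1+(n-2)b_max)/(1+(n-2)b̃_max))·√(2ã_max) ≥ ((n²-5n+4)/(n²-7n+14))·(1/(n-4)); (ii) (a_max - ã_max)/(1+2(n-1)ã_max) - (b_max - b̃_max)/(1+(n-2)b̃_max) ≥ 0; (iii) 2·[(a_max - ã_max)/(1+2(n-1)ã_max) - (1+γ_max)·(b_max - b̃_max)/(1+(n-2)b̃_max)] + [2(n-1)(a_max - ã_max)/(1+2(n-1)ã_max) - (n-2)(b_max - b̃_max)/(1+(n-2)b̃_max)]·√(2ã_max) ≥ ((1+(n-2)b_max)/(1+(n-2)b̃_max))·(n·√(2ã_max)/(n²-5n+4)). -/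
import Mathlib


/-- `b_max = 1/(2n+2)`. -/
noncomputable def bMax (n : ℕ) : ℝ := 1 / (2 * (n : ℝ) + 2)

/-- `b̃_max = 1/(5n)`. -/
noncomputable def bTildeMax (n : ℕ) : ℝ := 1 / (5 * (n : ℝ))

/-- `a_max = b_max(2+(n-2)b_max)² / (2(2+(n-3)b_max))`. -/
noncomputable def aMax (n : ℕ) : ℝ :=
  bMax n * (2 + ((n : ℝ) - 2) * bMax n) ^ 2 / (2 * (2 + ((n : ℝ) - 3) * bMax n))

/-- `ã_max = b̃_max + (n-2)b̃_max²/2`. -/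
noncomputable def aTildeMax (n : ℕ) : ℝ :=
  bTildeMax n + ((n : ℝ) - 2) * bTildeMax n ^ 2 / 2

/-- `γ_max = b_max/(2+(n-3)b_max)`. -/
noncomputable def gammaMax (n : ℕ) : ℝ :=
  bMax n / (2 + ((n : ℝ) - 3) * bMax n)

/-- the three numerical inequalities needed to join the two families of
pinching cones, for `9 ≤ n ≤ 11`. -/
theorem stmt_9 (n : ℕ) (hn9 : 9 ≤ n) (hn11 : n ≤ 11) :
    ((1 + ((n : ℝ) - 2) * bMax n) / (1 + ((n : ℝ) - 2) * bTildeMax n)) *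
        Real.sqrt (2 * aTildeMax n) ≥
      (((n : ℝ) ^ 2 - 5 * n + 4) / ((n : ℝ) ^ 2 - 7 * n + 14)) * (1 / ((n : ℝ) - 4)) ∧
    (aMax n - aTildeMax n) / (1 + 2 * ((n : ℝ) - 1) * aTildeMax n) -
        (bMax n - bTildeMax n) / (1 + ((n : ℝ) - 2) * bTildeMax n) ≥ 0 ∧
    2 * ((aMax n - aTildeMax n) / (1 + 2 * ((n : ℝ) - 1) * aTildeMax n) -
          (1 + gammaMax n) * (bMax n - bTildeMax n) / (1 + ((n : ℝ) - 2) * bTildeMax n)) +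
        (2 * ((n : ℝ) - 1) * (aMax n - aTildeMax n) / (1 + 2 * ((n : ℝ) - 1) * aTildeMax n) -
          ((n : ℝ) - 2) * (bMax n - bTildeMax n) / (1 + ((n : ℝ) - 2) * bTildeMax n)) *
          Real.sqrt (2 * aTildeMax n) ≥
      ((1 + ((n : ℝ) - 2) * bMax n) / (1 + ((n : ℝ) - 2) * bTildeMax n)) *
        ((n : ℝ) * Real.sqrt (2 * aTildeMax n) / ((n : ℝ) ^ 2 - 5 * n + 4)) := by
  interval_cases n
  · have ht : 2 * aTildeMax 9 = 97 / 2025 := by norm_num [aTildeMax, bTildeMax]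
    set s := Real.sqrt (2 * aTildeMax 9) with hsdef
    have hs0 : 0 ≤ s := Real.sqrt_nonneg _
    have hsq : s ^ 2 = 97 / 2025 := by
      rw [hsdef, Real.sq_sqrt (by rw [ht]; norm_num)]; exact ht
    have hl : (0.2188 : ℝ) ≤ s := by nlinarith
    have hu : s ≤ 0.2189 := by nlinarith
    refine ⟨?_, ?_, ?_⟩
    · norm_num [bMax, bTildeMax]; nlinarith
    · norm_num [aMax, aTildeMax, bMax, bTildeMax]
    · norm_num [aMax, aTildeMax, bMax, bTildeMax, gammaMax]; nlinarith
  · have ht : 2 * aTildeMax 10 = 27 / 625 := by norm_num [aTildeMax, bTildeMax]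
    set s := Real.sqrt (2 * aTildeMax 10) with hsdef
    have hs0 : 0 ≤ s := Real.sqrt_nonneg _
    have hsq : s ^ 2 = 27 / 625 := by
      rw [hsdef, Real.sq_sqrt (by rw [ht]; norm_num)]; exact ht
    have hl : (0.207 : ℝ) ≤ s := by nlinarith
    have hu : s ≤ 0.208 := by nlinarith
    refine ⟨?_, ?_, ?_⟩
    · norm_num [bMax, bTildeMax]; nlinarith
    · norm_num [aMax, aTildeMax, bMax, bTildeMax]
    · norm_num [aMax, aTildeMax, bMax, bTildeMax, gammaMax]; nlinarith
  · have ht : 2 * aTildeMax 11 = 119 / 3025 := by norm_num [aTildeMax, bTildeMax]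
    set s := Real.sqrt (2 * aTildeMax 11) with hsdef
    have hs0 : 0 ≤ s := Real.sqrt_nonneg _
    have hsq : s ^ 2 = 119 / 3025 := by
      rw [hsdef, Real.sq_sqrt (by rw [ht]; norm_num)]; exact ht
    have hl : (0.198 : ℝ) ≤ s := by nlinarith
    have hu : s ≤ 0.199 := by nlinarith
    refine ⟨?_, ?_, ?_⟩
    · norm_num [bMax, bTildeMax]; nlinarith
    · norm_num [aMax, aTildeMax, bMax, bTildeMax]
    · norm_num [aMax, aTildeMax, bMax, bTildeMax, gammaMax]; nlinarith
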